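/- Let S be a decision rule system with n(S) > 0 and δ̄ ∈ EV(S). Consider the following round-based process: set α := ∅; while S_α ≠ ∅ and some rule of S_α has nonempty left-hand side, choose any node cover B of the hypergraph G((S_α)^max) with |B| ≤ β((S_α)^max) · ln|(S_α)^max| + 1, and replace α by α ∪ {a = δ : a ∈ B, (a=δ) ∈ K(S,δ̄)}. Then: (i) the process terminates after at most d(S) ≤ h_EAR(S) rounds; (ii) the total number of equations added over all rounds is at most h_EAR(S)³ · ln(k(S)+1) + h_EAR(S); and (iii) upon termination, the set {r ∈ S : K(r) ∪ α is consistent} equals the set of rules of S realizable for δ̄. In particular, this process describes the work of a decision tree Γ over S that solves the problem EAR(S) and satisfies h(Γ) ≤ h_EAR(S)³ · ln(k(S)+1) + h_EAR(S). -/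

import Mathlib

/-! Formalization of decision rule systems and decision trees
(Durdymyradov & Moshkov, "Greedy Algorithm for Inference of Decision Trees
from Decision Rule Systems"). -/

/-- Values of attributes: `some δ` is a natural number value, `none` is the
special symbol `*` (interpreted as a value not occurring in the system). -/
abbrev Val := Option ℕ

/-- A decision rule `(a_{i₁}=δ₁) ∧ ⋯ ∧ (a_{iₘ}=δₘ) → σ`: the left-hand side
is a finite set of equations (attribute, value), the right-hand side a decision. -/
structure Rule where
  lhs : Finset (ℕ × ℕ)
  rhs : ℕ
deriving DecidableEq

namespace Rule

/-- `A(r)`: the set of attributes of a rule. -/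
def attrs (r : Rule) : Finset ℕ := r.lhs.image Prod.fst

/-- `K(r)`: the equation system of the left-hand side of a rule. -/
def K (r : Rule) : Finset (ℕ × Val) := r.lhs.image (fun p => (p.1, some p.2))

/-- the length of a rule -/
def len (r : Rule) : ℕ := r.lhs.card

/-- A rule is wellformed if the attributes in its left-hand side are pairwise
different, i.e. each attribute carries at most one equation. -/
def WF (r : Rule) : Prop := ∀ p ∈ r.lhs, ∀ q ∈ r.lhs, p.1 = q.1 → p = q

end Rule

/-- `A(S)`: the set of attributes of a system of decision rules. -/
def attrsS (S : Finset Rule) : Finset ℕ := S.biUnion Rule.attrs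

/-- `n(S) = |A(S)|`. -/
def nS (S : Finset Rule) : ℕ := (attrsS S).card

/-- `d(S)`: maximum length of a rule of `S`. -/
def dS (S : Finset Rule) : ℕ := S.sup Rule.len

/-- `V_S(a)`: the set of values δ such that the equation `a = δ` occurs in `S`. -/
def VS (S : Finset Rule) (a : ℕ) : Finset ℕ :=
  S.biUnion (fun r => (r.lhs.filter (fun p => p.1 = a)).image Prod.snd)

/-- `EV_S(a) = V_S(a) ∪ {*}`. -/
def EVS (S : Finset Rule) (a : ℕ) : Finset Val := insert none ((VS S a).image some)

/-- `k(S) = max{|V_S(a)| : a ∈ A(S)}`. -/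
def kS (S : Finset Rule) : ℕ := (attrsS S).sup (fun a => (VS S a).card)

/-- A (wellformed) decision rule system: a finite nonempty set of wellformed rules. -/
def SysWF (S : Finset Rule) : Prop := S.Nonempty ∧ ∀ r ∈ S, r.WF

/-- An equation system is consistent if it does not assign two different values
to the same attribute. -/
def Consistent (E : Finset (ℕ × Val)) : Prop :=
  ∀ p ∈ E, ∀ q ∈ E, p.1 = q.1 → p.2 = q.2

instance : DecidablePred Consistent := fun E => by unfold Consistent; infer_instance

/-- `r_α`: the rule obtained from `r` by deleting from its left-hand side all
equations belonging to `α`. -/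
def Rule.restrict (r : Rule) (α : Finset (ℕ × Val)) : Rule :=
  ⟨r.lhs.filter (fun p => ((p.1, (some p.2 : Val)) ∉ α)), r.rhs⟩

/-- `S_α`: the set of rules `r_α` for `r ∈ S` with `K(r) ∪ α` consistent. -/
def sysRestrict (S : Finset Rule) (α : Finset (ℕ × Val)) : Finset Rule :=
  (S.filter (fun r => Consistent (r.K ∪ α))).image (fun r => r.restrict α)

/-- Extended decision trees: terminal nodes are labeled with sets of rules, and a
working node is labeled with an attribute and has one child for each value
(only the children corresponding to values in `EV_S(a)` are relevant). -/
inductive DT where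
  | leaf (τ : Finset Rule) : DT
  | node (a : ℕ) (c : Val → DT) : DT

/-- `Γ` is an extended decision tree over `S`: working nodes are labeled with
attributes of `A(S)` (with edges labeled by the elements of `EV_S(a)`),
terminal nodes with subsets of `S`. -/
def DT.Over (S : Finset Rule) : DT → Prop
  | .leaf τ => τ ⊆ S
  | .node a c => a ∈ attrsS S ∧ ∀ v ∈ EVS S a, DT.Over S (c v)

/-- `h(Γ)`: the maximum number of working nodes in a complete path of `Γ`. -/
def DT.depth (S : Finset Rule) : DT → ℕ
  | .leaf _ => 0
  | .node a c => 1 + (EVS S a).sup (fun v => DT.depth S (c v))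

/-- The number of terminal nodes of `Γ`. -/
def DT.numLeaves (S : Finset Rule) : DT → ℕ
  | .leaf _ => 1
  | .node a c => ∑ v ∈ EVS S a, DT.numLeaves S (c v)

/-- `Γ` solves `EAR(S)` starting from the already accumulated equation system `E`:
for every complete path `ξ` with consistent `K(ξ)`, every rule of the terminal
label `τ(ξ)` satisfies `K(r) ⊆ K(ξ)`, and every other rule of `S` has
`K(r) ∪ K(ξ)` inconsistent. -/
def DT.SolvesFrom (S : Finset Rule) : DT → Finset (ℕ × Val) → Prop
  | .leaf τ, E => Consistent E →
      (∀ r ∈ τ, r.K ⊆ E) ∧ ∀ r ∈ S, r ∉ τ → ¬ Consistent (r.K ∪ E)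
  | .node a c, E => ∀ v ∈ EVS S a, DT.SolvesFrom S (c v) (insert (a, v) E)

/-- `Γ` is a decision tree over `S` solving the problem `EAR(S)`. -/
def DT.SolvesEAR (S : Finset Rule) (Γ : DT) : Prop := Γ.Over S ∧ Γ.SolvesFrom S ∅

/-- `h_EAR(S)`: the minimum depth of a decision tree over `S` solving `EAR(S)`. -/
noncomputable def hEAR (S : Finset Rule) : ℕ :=
  sInf {n | ∃ Γ : DT, DT.SolvesEAR S Γ ∧ DT.depth S Γ = n}

/-- A node cover of the hypergraph `G(S)`. -/
def IsNodeCover (S : Finset Rule) (B : Finset ℕ) : Prop :=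
  B ⊆ attrsS S ∧ ∀ r ∈ S, r.attrs.Nonempty → (r.attrs ∩ B).Nonempty

/-- `β(S)`: the minimum cardinality of a node cover of `G(S)`. -/
noncomputable def betaS (S : Finset Rule) : ℕ :=
  sInf {k | ∃ B : Finset ℕ, IsNodeCover S B ∧ B.card = k}

/-- `M` is a possible choice of `S^max`: a set of rules of `S` of length `d(S)`
containing exactly one representative from each equivalence class
(`r₁ ∼ r₂ iff K(r₁) = K(r₂)`) of the set of rules of length `d(S)`, and
no other rules. -/
def IsMaxSet (S M : Finset Rule) : Prop :=
  (∀ r ∈ M, r ∈ S ∧ r.len = dS S) ∧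
  (∀ r ∈ S, r.len = dS S → ∃ r' ∈ M, r'.K = r.K) ∧
  (∀ r₁ ∈ M, ∀ r₂ ∈ M, r₁.K = r₂.K → r₁ = r₂)

/-- `δ̄ ∈ EV(S)`, a tuple represented as a function on attributes. -/
def InEV (S : Finset Rule) (f : ℕ → Val) : Prop := ∀ a ∈ attrsS S, f a ∈ EVS S a

/-- `K(S, δ̄)`. -/
def KofTuple (S : Finset Rule) (f : ℕ → Val) : Finset (ℕ × Val) :=
  (attrsS S).image (fun a => (a, f a))

/-- The rule `r` is realizable for the tuple `δ̄`, i.e. `K(r) ⊆ K(S, δ̄)`. -/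
def Realizable (S : Finset Rule) (f : ℕ → Val) (r : Rule) : Prop :=
  r.K ⊆ KofTuple S f

instance (S : Finset Rule) (f : ℕ → Val) : DecidablePred (Realizable S f) :=
  fun r => by unfold Realizable; infer_instance

/-- The equations `{a = δ : a ∈ B, (a = δ) ∈ K(S, δ̄)}` added during a round
in which the values of the attributes from `B` are computed. -/
def roundEqs (S : Finset Rule) (f : ℕ → Val) (B : Finset ℕ) : Finset (ℕ × Val) :=
  (KofTuple S f).filter (fun p => p.1 ∈ B)

/-- The equation system `α` accumulated after the rounds with attribute sets
`Bs` (head of the list first). -/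
def accAlpha (S : Finset Rule) (f : ℕ → Val) (Bs : List (Finset ℕ)) : Finset (ℕ × Val) :=
  (Bs.map (roundEqs S f)).foldr (· ∪ ·) ∅

/-- A round of the process performed with the current accumulated equation
system `α` and the chosen attribute set `B`: the round is performed only when
`S_α ≠ ∅` and some rule of `S_α` has nonempty left-hand side, and `B` is a
node cover of the hypergraph `G((S_α)^max)` with
`|B| ≤ β((S_α)^max) · ln |(S_α)^max| + 1`. -/
def RoundOK (S : Finset Rule) (α : Finset (ℕ × Val)) (B : Finset ℕ) : Prop :=
  (sysRestrict S α).Nonempty ∧ (∃ r ∈ sysRestrict S α, r.lhs ≠ ∅) ∧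
  ∃ M, IsMaxSet (sysRestrict S α) M ∧ IsNodeCover M B ∧
    (B.card : ℝ) ≤ (betaS M : ℝ) * Real.log M.card + 1

/-- `Bs` is a (partial) run of the round-based process on the tuple `δ̄`
(the function `f`): starting from `α = ∅`, each round `i` is performed
with the equation system accumulated during the previous rounds. -/
def PartialRun (S : Finset Rule) (f : ℕ → Val) (Bs : List (Finset ℕ)) : Prop :=
  ∀ i : Fin Bs.length, RoundOK S (accAlpha S f (Bs.take i)) (Bs.get i)

/-- The stopping condition of the process: `S_α = ∅` or every rule of `S_α`
has empty left-hand side. -/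
def Finished (S : Finset Rule) (f : ℕ → Val) (Bs : List (Finset ℕ)) : Prop :=
  sysRestrict S (accAlpha S f Bs) = ∅ ∨
    ∀ r ∈ sysRestrict S (accAlpha S f Bs), r.lhs = ∅


/-!
A round fixes the values of a node cover of the longest rules of `S_α`, so each of them loses an
equation or becomes inconsistent with `α`: `d(S_α)` drops in every round, so there are at most
`d(S)` rounds, and `d(S) ≤ h_EAR(S)` since a tree answered according to a longest rule must query
all of its attributes. When the process stops, every rule consistent with `α` has all its
equations in `α ⊆ K(S, δ̄)`.

To count equations, run an optimal tree `Γ` on adversarial answers. Answering `*` outside `α`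
makes `Γ` query a node cover of `(S_α)^max`, so `β((S_α)^max) ≤ h_EAR(S)`; answering as a rule of
`(S_α)^max` prescribes makes the path of `Γ` determine that rule, so
`|(S_α)^max| ≤ (k(S) + 1)^h_EAR(S)`. By the greedy set-cover bound a cover of the required size
exists, and each round adds at most `h_EAR(S)² ln (k(S) + 1) + 1` equations.
-/

open Finset

namespace Rule

variable {r : Rule}

@[simp]
lemma mem_K {a δ : ℕ} : ((a, some δ) : ℕ × Val) ∈ r.K ↔ (a, δ) ∈ r.lhs := by
  simp [K]

lemma forall_mem_K {P : ℕ × Val → Prop} :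
    (∀ p ∈ r.K, P p) ↔ ∀ a δ, (a, δ) ∈ r.lhs → P (a, some δ) := by
  rw [K, forall_mem_image]
  simp only [Prod.forall]

lemma card_K (r : Rule) : r.K.card = r.len :=
  card_image_of_injective _ fun p q h => by simpa [Prod.ext_iff] using h

lemma attrs_eq_image_K (r : Rule) : r.attrs = r.K.image Prod.fst := by
  simp [attrs, K, image_image, Function.comp_def]

lemma attrs_nonempty_iff : r.attrs.Nonempty ↔ 0 < r.len := by
  simp [attrs, len, card_pos]

lemma mem_attrs {a : ℕ} : a ∈ r.attrs ↔ ∃ δ, (a, δ) ∈ r.lhs := by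
  simp [attrs]

lemma consistent_K (h : r.WF) : Consistent r.K := by
  simp only [Consistent, forall_mem_K]
  intro a δ ha b ε hb hab
  cases h _ ha _ hb hab
  rfl

@[simp]
lemma mem_restrict_lhs {α : Finset (ℕ × Val)} {a δ : ℕ} :
    (a, δ) ∈ (r.restrict α).lhs ↔ (a, δ) ∈ r.lhs ∧ ((a, some δ) : ℕ × Val) ∉ α := by
  simp [restrict]

lemma restrict_lhs_subset (α : Finset (ℕ × Val)) : (r.restrict α).lhs ⊆ r.lhs :=
  filter_subset _ _

lemma restrict_lhs_anti {α α' : Finset (ℕ × Val)} (h : α ⊆ α') :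
    (r.restrict α').lhs ⊆ (r.restrict α).lhs := by
  rintro ⟨a, δ⟩
  simp only [mem_restrict_lhs]
  exact fun ⟨hr, ha⟩ => ⟨hr, fun h' => ha (h h')⟩

lemma restrict_lhs_ssubset {α α' : Finset (ℕ × Val)} (h : α ⊆ α') {a δ : ℕ}
    (hmem : (a, δ) ∈ (r.restrict α).lhs) (hα' : ((a, some δ) : ℕ × Val) ∈ α') :
    (r.restrict α').lhs ⊂ (r.restrict α).lhs :=
  (ssubset_iff_of_subset (restrict_lhs_anti h)).2
    ⟨(a, δ), hmem, fun h' => (mem_restrict_lhs.1 h').2 hα'⟩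

lemma restrict_WF (h : r.WF) (α : Finset (ℕ × Val)) : (r.restrict α).WF :=
  fun p hp q hq => h p (restrict_lhs_subset α hp) q (restrict_lhs_subset α hq)

lemma restrict_empty (r : Rule) : r.restrict ∅ = r := by
  simp [restrict]

end Rule

lemma Consistent.mono {E F : Finset (ℕ × Val)} (hEF : E ⊆ F) (h : Consistent F) :
    Consistent E :=
  fun p hp q hq => h p (hEF hp) q (hEF hq)

lemma Consistent.eq_of_mem_lhs {r : Rule} {E : Finset (ℕ × Val)} (h : Consistent (r.K ∪ E))
    {a δ : ℕ} {v : Val} (hr : (a, δ) ∈ r.lhs) (hE : (a, v) ∈ E) : v = some δ :=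
  h _ (mem_union_right _ hE) _ (mem_union_left _ (Rule.mem_K.2 hr)) rfl

def graphOn (g : ℕ → Val) (A : Finset ℕ) : Finset (ℕ × Val) := A.image fun a => (a, g a)

section Graph

variable {g : ℕ → Val}

lemma mem_graphOn {A : Finset ℕ} {p : ℕ × Val} : p ∈ graphOn g A ↔ p.1 ∈ A ∧ p.2 = g p.1 := by
  obtain ⟨a, v⟩ := p
  simp only [graphOn, mem_image, Prod.mk.injEq]
  constructor
  · rintro ⟨b, hb, rfl, rfl⟩
    exact ⟨hb, rfl⟩
  · rintro ⟨ha, rfl⟩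
    exact ⟨a, ha, rfl, rfl⟩

lemma card_graphOn_le (A : Finset ℕ) : (graphOn g A).card ≤ A.card := card_image_le

lemma consistent_graphOn (A : Finset ℕ) : Consistent (graphOn g A) := by
  intro p hp q hq h
  rw [(mem_graphOn.1 hp).2, (mem_graphOn.1 hq).2, h]

lemma consistent_K_union_graphOn {r : Rule} (hr : r.WF) {A : Finset ℕ}
    (h : ∀ a δ, (a, δ) ∈ r.lhs → a ∈ A → g a = some δ) :
    Consistent (r.K ∪ graphOn g A) := by
  have cross : ∀ p ∈ r.K, ∀ q ∈ graphOn g A, p.1 = q.1 → p.2 = q.2 := by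
    simp only [Rule.forall_mem_K]
    intro a δ hδ q hq haq
    rw [(mem_graphOn.1 hq).2, ← haq, h a δ hδ (haq ▸ (mem_graphOn.1 hq).1)]
  intro p hp q hq hpq
  rcases mem_union.1 hp with hp | hp <;> rcases mem_union.1 hq with hq | hq
  · exact Rule.consistent_K hr p hp q hq hpq
  · exact cross p hp q hq hpq
  · exact (cross q hq p hp hpq.symm).symm
  · exact consistent_graphOn A p hp q hq hpq

end Graph

section Restriction

variable {S : Finset Rule} {α : Finset (ℕ × Val)}

lemma mem_sysRestrict {r' : Rule} :
    r' ∈ sysRestrict S α ↔ ∃ r ∈ S, Consistent (r.K ∪ α) ∧ r.restrict α = r' := by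
  simp [sysRestrict, and_assoc]

lemma sysRestrict_empty (hS : ∀ r ∈ S, r.WF) : sysRestrict S ∅ = S := by
  ext r
  simp only [mem_sysRestrict, union_empty, Rule.restrict_empty]
  exact ⟨fun ⟨_, hr, _, h⟩ => h ▸ hr, fun hr => ⟨r, hr, Rule.consistent_K (hS r hr), rfl⟩⟩

lemma dS_pos {T : Finset Rule} (h : ∃ r ∈ T, r.lhs ≠ ∅) : 0 < dS T := by
  obtain ⟨r, hr, hne⟩ := h
  exact lt_of_lt_of_le (card_pos.2 (nonempty_iff_ne_empty.2 hne)) (le_sup (f := Rule.len) hr)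

end Restriction

section Accumulation

variable {S : Finset Rule} {f : ℕ → Val}

lemma accAlpha_append_singleton (Bs : List (Finset ℕ)) (B : Finset ℕ) :
    accAlpha S f (Bs ++ [B]) = accAlpha S f Bs ∪ roundEqs S f B := by
  induction Bs with
  | nil => simp [accAlpha]
  | cons B' Bs ih =>
    simp only [accAlpha, List.cons_append, List.map_cons, List.foldr_cons] at ih ⊢
    rw [ih, union_assoc]

lemma accAlpha_subset_KofTuple (Bs : List (Finset ℕ)) : accAlpha S f Bs ⊆ KofTuple S f := by
  induction Bs with
  | nil => exact empty_subset _
  | cons B Bs ih => exact union_subset (filter_subset _ _) ih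

lemma card_roundEqs_le (B : Finset ℕ) : (roundEqs S f B).card ≤ B.card := by
  refine le_trans (card_le_card fun p hp => ?_) (card_graphOn_le (g := f) B)
  obtain ⟨hK, hB⟩ := mem_filter.1 hp
  exact mem_graphOn.2 ⟨hB, (mem_graphOn.1 hK).2⟩

lemma partialRun_nil : PartialRun S f [] := fun i => i.elim0

lemma partialRun_append_singleton_iff {Bs : List (Finset ℕ)} {B : Finset ℕ} :
    PartialRun S f (Bs ++ [B]) ↔ PartialRun S f Bs ∧ RoundOK S (accAlpha S f Bs) B := by
  constructor
  · intro h
    refine ⟨fun i => ?_, ?_⟩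
    · simpa [List.take_append_of_le_length i.2.le, List.getElem_append_left i.2] using
        h ⟨i, by simp⟩
    · simpa using h ⟨Bs.length, by simp⟩
  · rintro ⟨h, hB⟩ ⟨i, hi⟩
    simp only [List.length_append, List.length_singleton] at hi
    rcases Nat.lt_or_ge i Bs.length with hi' | hi'
    · simpa [List.take_append_of_le_length hi'.le, List.getElem_append_left hi'] using h ⟨i, hi'⟩
    · obtain rfl : i = Bs.length := by omega
      simpa using hB

end Accumulation

section Rounds

variable {S : Finset Rule} {f : ℕ → Val} {α : Finset (ℕ × Val)}

lemma dS_sysRestrict_union_roundEqs_lt {B : Finset ℕ} (hB : RoundOK S α B) :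
    dS (sysRestrict S (α ∪ roundEqs S f B)) < dS (sysRestrict S α) := by
  obtain ⟨-, hne, M, hM, hcov, -⟩ := hB
  set d := dS (sysRestrict S α)
  have hd : 0 < d := dS_pos hne
  refine (Finset.sup_lt_iff hd).2 fun r' hr' => ?_
  obtain ⟨r, hrS, hcons', rfl⟩ := mem_sysRestrict.1 hr'
  have hsub : α ⊆ α ∪ roundEqs S f B := subset_union_left
  have hmem : r.restrict α ∈ sysRestrict S α :=
    mem_sysRestrict.2 ⟨r, hrS, hcons'.mono (union_subset_union_right hsub), rfl⟩
  have hle : (r.restrict α).len ≤ d := le_sup (f := Rule.len) hmem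
  rcases hle.lt_or_eq with hlt | hlen
  · exact lt_of_le_of_lt (card_le_card (Rule.restrict_lhs_anti hsub)) hlt
  obtain ⟨r₀, hr₀, hK⟩ := hM.2.1 _ hmem hlen
  obtain ⟨a, ha⟩ := hcov.2 r₀ hr₀ (Rule.attrs_nonempty_iff.2 ((hM.1 r₀ hr₀).2 ▸ hd))
  obtain ⟨har₀, haB⟩ := mem_inter.1 ha
  rw [Rule.attrs_eq_image_K, hK, ← Rule.attrs_eq_image_K, Rule.mem_attrs] at har₀
  obtain ⟨δ, hδ⟩ := har₀
  have hδr : (a, δ) ∈ r.lhs := Rule.restrict_lhs_subset α hδ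
  have hround : ((a, f a) : ℕ × Val) ∈ roundEqs S f B :=
    mem_filter.2 ⟨mem_graphOn.2 ⟨mem_biUnion.2 ⟨r, hrS, Rule.mem_attrs.2 ⟨δ, hδr⟩⟩, rfl⟩, haB⟩
  have hfa : f a = some δ := hcons'.eq_of_mem_lhs hδr (mem_union_right _ hround)
  rw [← hlen]
  exact card_lt_card (Rule.restrict_lhs_ssubset hsub hδ (hfa ▸ mem_union_right _ hround))

lemma dS_sysRestrict_add_length_le (hS : ∀ r ∈ S, r.WF) {Bs : List (Finset ℕ)}
    (h : PartialRun S f Bs) : dS (sysRestrict S (accAlpha S f Bs)) + Bs.length ≤ dS S := by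
  induction Bs using List.reverseRecOn with
  | nil => simp [accAlpha, sysRestrict_empty hS]
  | append_singleton Bs B ih =>
    obtain ⟨h, hB⟩ := partialRun_append_singleton_iff.1 h
    have hstep := dS_sysRestrict_union_roundEqs_lt (f := f) hB
    have hprev := ih h
    rw [accAlpha_append_singleton, List.length_append, List.length_singleton]
    omega

lemma PartialRun.length_le (hS : ∀ r ∈ S, r.WF) {Bs : List (Finset ℕ)}
    (h : PartialRun S f Bs) : Bs.length ≤ dS S :=
  le_of_add_le_right (dS_sysRestrict_add_length_le hS h)

lemma Finished.filter_consistent_eq {Bs : List (Finset ℕ)} (h : Finished S f Bs) :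
    S.filter (fun r => Consistent (r.K ∪ accAlpha S f Bs)) = S.filter (Realizable S f) := by
  have hα := accAlpha_subset_KofTuple (S := S) (f := f) Bs
  ext r
  simp only [mem_filter, and_congr_right_iff]
  intro hrS
  refine ⟨fun hcons => ?_, fun hreal => (consistent_graphOn _).mono (union_subset hreal hα)⟩
  have hmem : r.restrict _ ∈ sysRestrict S (accAlpha S f Bs) :=
    mem_sysRestrict.2 ⟨r, hrS, hcons, rfl⟩
  rcases h with hempty | hall
  · simp [hempty] at hmem
  · rw [Realizable, Rule.K, image_subset_iff]
    rintro ⟨a, δ⟩ hδ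
    by_contra hnot
    have : (a, δ) ∈ (r.restrict (accAlpha S f Bs)).lhs :=
      Rule.mem_restrict_lhs.2 ⟨hδ, fun h' => hnot (hα h')⟩
    simp [hall _ hmem] at this

end Rounds

namespace DT

variable {S : Finset Rule} {g : ℕ → Val}

/-- `graphOn g (Γ.queried g)` is `K(ξ)` for the complete path `ξ` that `Γ` follows when each
attribute `a` has the value `g a`. -/
def queried (g : ℕ → Val) : DT → Finset ℕ
  | .leaf _ => ∅
  | .node a c => insert a ((c (g a)).queried g)

/-- The equation systems `K(ξ)` of all complete paths `ξ` of a tree. -/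
def pathSets (S : Finset Rule) : DT → Finset (Finset (ℕ × Val))
  | .leaf _ => {∅}
  | .node a c => (EVS S a).biUnion fun v => ((c v).pathSets S).image (insert (a, v))

lemma card_queried_le (hg : InEV S g) : ∀ {Γ : DT}, Γ.Over S → (Γ.queried g).card ≤ Γ.depth S
  | .leaf _, _ => by simp [queried, depth]
  | .node a c, ⟨ha, hc⟩ => by
    have hga := hg a ha
    calc (insert a ((c (g a)).queried g)).card ≤ ((c (g a)).queried g).card + 1 :=
          card_insert_le _ _
      _ ≤ (c (g a)).depth S + 1 := by grw [card_queried_le hg (hc _ hga)]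
      _ ≤ depth S (.node a c) := by
          rw [depth, add_comm]
          grw [← le_sup (f := fun v => (c v).depth S) hga]

lemma graphOn_queried_mem_pathSets (hg : InEV S g) :
    ∀ {Γ : DT}, Γ.Over S → graphOn g (Γ.queried g) ∈ Γ.pathSets S
  | .leaf _, _ => by simp [queried, pathSets, graphOn]
  | .node a c, ⟨ha, hc⟩ => by
    have hga := hg a ha
    simp only [queried, pathSets, graphOn, image_insert] at *
    exact mem_biUnion.2 ⟨g a, hga, mem_image_of_mem _ (graphOn_queried_mem_pathSets hg (hc _ hga))⟩

lemma card_pathSets_le : ∀ {Γ : DT}, Γ.Over S → (Γ.pathSets S).card ≤ (kS S + 1) ^ Γ.depth S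
  | .leaf _, _ => by simp [pathSets, depth]
  | .node a c, ⟨ha, hc⟩ => by
    set s := (EVS S a).sup fun v => (c v).depth S
    have hEVS : (EVS S a).card ≤ kS S + 1 :=
      (card_insert_le _ _).trans (Nat.succ_le_succ (card_image_le.trans
        (le_sup (f := fun a => (VS S a).card) ha)))
    calc (pathSets S (.node a c)).card
        ≤ ∑ v ∈ EVS S a, (((c v).pathSets S).image (insert (a, v))).card := card_biUnion_le
      _ ≤ ∑ _v ∈ EVS S a, (kS S + 1) ^ s := sum_le_sum fun v hv =>
          card_image_le.trans <| (card_pathSets_le (hc v hv)).trans <|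
            Nat.pow_le_pow_right (Nat.succ_pos _) (le_sup (f := fun v => (c v).depth S) hv)
      _ = (EVS S a).card * (kS S + 1) ^ s := by rw [sum_const, smul_eq_mul]
      _ ≤ (kS S + 1) ^ (depth S (.node a c)) := by
          rw [depth, pow_add, pow_one]
          exact Nat.mul_le_mul_right _ hEVS

lemma K_subset_of_solvesFrom (hg : InEV S g) {r : Rule} (hr : r ∈ S) :
    ∀ {Γ : DT} {E : Finset (ℕ × Val)}, Γ.Over S → Γ.SolvesFrom S E →
      Consistent (r.K ∪ (E ∪ graphOn g (Γ.queried g))) → r.K ⊆ E ∪ graphOn g (Γ.queried g)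
  | .leaf τ, E, _, hsol, hcons => by
    simp only [queried, graphOn, image_empty, union_empty] at hcons ⊢
    obtain ⟨hτ, hnot⟩ := hsol (hcons.mono subset_union_right)
    by_cases hrτ : r ∈ τ
    · exact hτ r hrτ
    · exact absurd hcons (hnot r hr hrτ)
  | .node a c, E, ⟨ha, hc⟩, hsol, hcons => by
    have hga := hg a ha
    have heq : E ∪ graphOn g ((node a c).queried g) =
        insert (a, g a) E ∪ graphOn g ((c (g a)).queried g) := by
      simp only [queried, graphOn, image_insert, insert_union, union_insert]
    rw [heq] at hcons ⊢
    exact K_subset_of_solvesFrom hg hr (hc _ hga) (hsol _ hga) hcons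

lemma SolvesEAR.K_subset_graphOn_queried {Γ : DT} (hΓ : Γ.SolvesEAR S) (hg : InEV S g)
    {r : Rule} (hr : r ∈ S) (hWF : r.WF)
    (hagree : ∀ a δ, (a, δ) ∈ r.lhs → a ∈ Γ.queried g → g a = some δ) :
    r.K ⊆ graphOn g (Γ.queried g) := by
  have hsub := K_subset_of_solvesFrom hg hr hΓ.1 hΓ.2 (E := ∅)
  rw [empty_union] at hsub
  exact hsub (consistent_K_union_graphOn hWF hagree)

def queryAll (S : Finset Rule) : List ℕ → Finset (ℕ × Val) → DT
  | [], E => .leaf (S.filter fun r => r.K ⊆ E)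
  | a :: L, E => .node a fun v => queryAll S L (insert (a, v) E)

lemma queryAll_over : ∀ {L : List ℕ} {E : Finset (ℕ × Val)}, (∀ a ∈ L, a ∈ attrsS S) →
    (queryAll S L E).Over S
  | [], _, _ => filter_subset _ _
  | a :: _, _, hL => ⟨hL a List.mem_cons_self,
      fun _ _ => queryAll_over fun b hb => hL b (List.mem_cons_of_mem a hb)⟩

lemma queryAll_solvesFrom : ∀ {L : List ℕ} {E : Finset (ℕ × Val)},
    (∀ a ∈ attrsS S, a ∈ L ∨ ∃ v, (a, v) ∈ E) → (queryAll S L E).SolvesFrom S E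
  | [], E, hcover => fun _ => by
    refine ⟨fun r hr => (mem_filter.1 hr).2, fun r hrS hrτ hcons => hrτ ?_⟩
    refine mem_filter.2 ⟨hrS, ?_⟩
    rw [Rule.K, image_subset_iff]
    intro ⟨a, δ⟩ hδ
    obtain ⟨v, hv⟩ := (hcover a (mem_biUnion.2 ⟨r, hrS, Rule.mem_attrs.2 ⟨δ, hδ⟩⟩)).resolve_left
      List.not_mem_nil
    exact hcons.eq_of_mem_lhs hδ hv ▸ hv
  | a :: L, E, hcover => fun v _ => queryAll_solvesFrom fun b hb => by
    rcases hcover b hb with hL | ⟨w, hw⟩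
    · rcases List.mem_cons.1 hL with rfl | hL
      · exact Or.inr ⟨v, mem_insert_self _ _⟩
      · exact Or.inl hL
    · exact Or.inr ⟨w, mem_insert_of_mem hw⟩

lemma solvesEAR_queryAll (S : Finset Rule) : (queryAll S (attrsS S).toList ∅).SolvesEAR S :=
  ⟨queryAll_over fun _ => mem_toList.1, queryAll_solvesFrom fun _ ha => Or.inl (mem_toList.2 ha)⟩

end DT

lemma exists_solvesEAR_depth_eq_hEAR (S : Finset Rule) :
    ∃ Γ : DT, Γ.SolvesEAR S ∧ Γ.depth S = hEAR S :=
  Nat.sInf_mem (s := {n | ∃ Γ : DT, Γ.SolvesEAR S ∧ Γ.depth S = n})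
    ⟨_, _, DT.solvesEAR_queryAll S, rfl⟩

section Adversary

open scoped Classical in
noncomputable def Rule.value (r : Rule) (a : ℕ) : Val :=
  if h : ∃ δ, (a, δ) ∈ r.lhs then some h.choose else none

lemma Rule.value_eq_some {r : Rule} (hr : r.WF) {a δ : ℕ} (h : (a, δ) ∈ r.lhs) :
    r.value a = some δ := by
  have he : ∃ δ', (a, δ') ∈ r.lhs := ⟨δ, h⟩
  rw [Rule.value, dif_pos he]
  cases hr _ he.choose_spec _ h rfl
  rfl

lemma Rule.mem_lhs_of_value_eq_some {r : Rule} {a δ : ℕ} (h : r.value a = some δ) :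
    (a, δ) ∈ r.lhs := by
  unfold Rule.value at h
  split_ifs at h with he
  exact Option.some_inj.1 h ▸ he.choose_spec

variable {S : Finset Rule} {f : ℕ → Val} {α : Finset (ℕ × Val)}

lemma inEV_value {r r' : Rule} (hr : r ∈ S) (h : r'.lhs ⊆ r.lhs) : InEV S r'.value := by
  intro a _
  rcases hv : r'.value a with _ | δ
  · exact mem_insert_self _ _
  · exact mem_insert_of_mem (mem_image_of_mem _ (mem_biUnion.2
      ⟨r, hr, mem_image.2 ⟨(a, δ), mem_filter.2 ⟨h (Rule.mem_lhs_of_value_eq_some hv), rfl⟩, rfl⟩⟩))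

def patch (α : Finset (ℕ × Val)) (f g : ℕ → Val) (a : ℕ) : Val :=
  if ((a, f a) : ℕ × Val) ∈ α then f a else g a

lemma inEV_patch {g : ℕ → Val} (hf : InEV S f) (hg : InEV S g) : InEV S (patch α f g) := by
  intro a ha
  unfold patch
  split_ifs
  exacts [hf a ha, hg a ha]

lemma patch_eq_some {g : ℕ → Val} {r : Rule} (hα : α ⊆ KofTuple S f)
    (hcons : Consistent (r.K ∪ α)) {a δ : ℕ} (h : (a, δ) ∈ r.lhs) :
    patch α f g a = some δ ∨ ((a, δ) ∈ (r.restrict α).lhs ∧ patch α f g a = g a) := by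
  unfold patch
  split_ifs with hfix
  · exact Or.inl (hcons.eq_of_mem_lhs h hfix)
  · refine Or.inr ⟨Rule.mem_restrict_lhs.2 ⟨h, fun hδ => hfix ?_⟩, rfl⟩
    rwa [← (mem_graphOn.1 (hα hδ)).2]

lemma notMem_of_mem_restrict_lhs {r : Rule} (hcons : Consistent (r.K ∪ α)) {a δ : ℕ}
    (h : (a, δ) ∈ (r.restrict α).lhs) : ((a, f a) : ℕ × Val) ∉ α := fun hfix =>
  (Rule.mem_restrict_lhs.1 h).2
    (hcons.eq_of_mem_lhs (Rule.restrict_lhs_subset α h) hfix ▸ hfix)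

lemma dS_le_depth (hS : SysWF S) {Γ : DT} (hΓ : Γ.SolvesEAR S) : dS S ≤ Γ.depth S := by
  obtain ⟨r, hrS, hlen⟩ := exists_mem_eq_sup S hS.1 Rule.len
  have hWF := hS.2 r hrS
  have hg := inEV_value hrS subset_rfl
  have hK := hΓ.K_subset_graphOn_queried hg hrS hWF fun a δ h _ => Rule.value_eq_some hWF h
  calc dS S = r.K.card := by rw [Rule.card_K, ← hlen, dS]
    _ ≤ (graphOn r.value (Γ.queried r.value)).card := card_le_card hK
    _ ≤ Γ.depth S := (card_graphOn_le _).trans (DT.card_queried_le hg hΓ.1)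

lemma dS_le_hEAR (hS : SysWF S) : dS S ≤ hEAR S := by
  obtain ⟨Γ, hΓ, hdepth⟩ := exists_solvesEAR_depth_eq_hEAR S
  exact hdepth ▸ dS_le_depth hS hΓ

lemma betaS_le_depth (hWF : ∀ r ∈ S, r.WF) (hf : InEV S f) (hα : α ⊆ KofTuple S f)
    {M : Finset Rule} (hM : IsMaxSet (sysRestrict S α) M) {Γ : DT} (hΓ : Γ.SolvesEAR S) :
    betaS M ≤ Γ.depth S := by
  set g := patch α f fun _ => none
  have hg : InEV S g := inEV_patch hf fun a _ => mem_insert_self _ _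
  set Q := Γ.queried g
  have hcover : IsNodeCover M (Q ∩ attrsS M) := by
    refine ⟨inter_subset_right, fun r'' hr'' hne => ?_⟩
    obtain ⟨r, hrS, hcons, rfl⟩ := mem_sysRestrict.1 (hM.1 r'' hr'').1
    by_contra hmiss
    have hfree : ∀ a δ, (a, δ) ∈ (r.restrict α).lhs → a ∉ Q := fun a δ h haQ =>
      hmiss ⟨a, mem_inter.2 ⟨Rule.mem_attrs.2 ⟨δ, h⟩,
        mem_inter.2 ⟨haQ, mem_biUnion.2 ⟨_, hr'', Rule.mem_attrs.2 ⟨δ, h⟩⟩⟩⟩⟩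
    have hK := hΓ.K_subset_graphOn_queried hg hrS (hWF r hrS) fun a δ h haQ =>
      (patch_eq_some hα hcons h).resolve_right fun ⟨h', _⟩ => hfree a δ h' haQ
    obtain ⟨a, ha⟩ := hne
    obtain ⟨δ, hδ⟩ := Rule.mem_attrs.1 ha
    exact hfree a δ hδ
      (mem_graphOn.1 (hK (Rule.mem_K.2 (Rule.restrict_lhs_subset α hδ)))).1
  calc betaS M ≤ (Q ∩ attrsS M).card := Nat.sInf_le ⟨_, hcover, rfl⟩
    _ ≤ Q.card := card_le_card inter_subset_left
    _ ≤ Γ.depth S := DT.card_queried_le hg hΓ.1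

lemma K_restrict_eq_filter_graphOn (hf : InEV S f) (hα : α ⊆ KofTuple S f) {r : Rule}
    (hrS : r ∈ S) (hWF : r.WF) (hcons : Consistent (r.K ∪ α)) {Γ : DT} (hΓ : Γ.SolvesEAR S) :
    (r.restrict α).K = (graphOn (patch α f (r.restrict α).value)
        (Γ.queried (patch α f (r.restrict α).value))).filter
      fun p => p.2 ≠ none ∧ ((p.1, f p.1) : ℕ × Val) ∉ α := by
  set g := patch α f (r.restrict α).value
  have hg : InEV S g := inEV_patch hf (inEV_value hrS (Rule.restrict_lhs_subset α))
  have hK := hΓ.K_subset_graphOn_queried hg hrS hWF fun a δ h _ =>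
    (patch_eq_some hα hcons h).elim id fun ⟨h', hga⟩ =>
      hga.trans (Rule.value_eq_some (Rule.restrict_WF hWF α) h')
  ext ⟨a, v⟩
  simp only [mem_filter]
  constructor
  · intro hp
    obtain ⟨⟨b, δ⟩, hδ, he⟩ := mem_image.1 hp
    cases he
    exact ⟨hK (Rule.mem_K.2 (Rule.restrict_lhs_subset α hδ)), Option.some_ne_none δ,
      notMem_of_mem_restrict_lhs hcons hδ⟩
  · rintro ⟨hp, hv, hfree⟩
    obtain ⟨δ, rfl⟩ := Option.ne_none_iff_exists'.1 hv
    have hval : (r.restrict α).value a = some δ := by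
      simpa [g, patch, hfree] using (mem_graphOn.1 hp).2.symm
    exact Rule.mem_K.2 (Rule.mem_lhs_of_value_eq_some hval)

lemma card_isMaxSet_le_pow_depth (hWF : ∀ r ∈ S, r.WF) (hf : InEV S f) (hα : α ⊆ KofTuple S f)
    {M : Finset Rule} (hM : IsMaxSet (sysRestrict S α) M) {Γ : DT} (hΓ : Γ.SolvesEAR S) :
    M.card ≤ (kS S + 1) ^ Γ.depth S := by
  have hsrc : ∀ r'' ∈ M, ∃ r ∈ S, Consistent (r.K ∪ α) ∧ r.restrict α = r'' :=
    fun r'' hr'' => mem_sysRestrict.1 (hM.1 r'' hr'').1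
  set path := fun r'' : Rule =>
    graphOn (patch α f r''.value) (Γ.queried (patch α f r''.value))
  have hpath : ∀ r'' ∈ M, path r'' ∈ Γ.pathSets S := by
    intro r'' hr''
    obtain ⟨r, hrS, -, rfl⟩ := hsrc r'' hr''
    exact DT.graphOn_queried_mem_pathSets
      (inEV_patch hf (inEV_value hrS (Rule.restrict_lhs_subset α))) hΓ.1
  have hinj : Set.InjOn path M := by
    intro r₁ h₁ r₂ h₂ heq
    refine hM.2.2 r₁ h₁ r₂ h₂ ?_
    obtain ⟨s₁, hs₁, hc₁, rfl⟩ := hsrc r₁ h₁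
    obtain ⟨s₂, hs₂, hc₂, rfl⟩ := hsrc r₂ h₂
    rw [K_restrict_eq_filter_graphOn hf hα hs₁ (hWF s₁ hs₁) hc₁ hΓ,
      K_restrict_eq_filter_graphOn hf hα hs₂ (hWF s₂ hs₂) hc₂ hΓ]
    exact congrArg (filter _) heq
  exact (card_le_card_of_injOn path hpath hinj).trans (DT.card_pathSets_le hΓ.1)

end Adversary

lemma mul_log_add_one_le_mul_log {c x y : ℝ} (hc : 0 ≤ c) (hx : 0 < x) (hy : 0 < y)
    (h : c * x ≤ (c - 1) * y) : c * Real.log x + 1 ≤ c * Real.log y := by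
  have hlog : Real.log x - Real.log y ≤ x / y - 1 := by
    rw [← Real.log_div hx.ne' hy.ne']
    exact Real.log_le_sub_one_of_pos (div_pos hx hy)
  have hdiv : c * (x / y - 1) ≤ -1 := by
    rw [show c * (x / y - 1) = (c * x - c * y) / y by field_simp, div_le_iff₀ hy]
    linarith
  nlinarith

lemma exists_mem_card_le_mul_card_filter {ι α : Type*} [DecidableEq α] (A : ι → Finset α)
    {C : Finset α} {s : Finset ι} (hs : s.Nonempty) (hC : ∀ i ∈ s, (A i ∩ C).Nonempty) :
    ∃ a ∈ C, s.card ≤ C.card * (s.filter fun i => a ∈ A i).card := by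
  classical
  obtain ⟨i₀, hi₀⟩ := hs
  obtain ⟨a, haC, hamax⟩ := exists_max_image C (fun b => (s.filter fun i => b ∈ A i).card)
    ((hC i₀ hi₀).mono inter_subset_right)
  refine ⟨a, haC, (card_le_card fun i hi => ?_).trans (card_biUnion_le_card_mul C _ _ hamax)⟩
  obtain ⟨b, hb⟩ := hC i hi
  exact mem_biUnion.2 ⟨b, (mem_inter.1 hb).2, mem_filter.2 ⟨hi, (mem_inter.1 hb).1⟩⟩

/-- Greedy set cover: an element of `C` hitting the most sets of `s` hits at least a `1/|C|`
fraction of them, so after picking it at most a `1 - 1/|C|` fraction remains. -/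
theorem exists_subset_hitting_card_le {ι α : Type*} [DecidableEq α] (A : ι → Finset α)
    (C : Finset α) (s : Finset ι) (hC : ∀ i ∈ s, (A i ∩ C).Nonempty) :
    ∃ B ⊆ C, (∀ i ∈ s, (A i ∩ B).Nonempty) ∧
      (B.card : ℝ) ≤ C.card * Real.log s.card + 1 := by
  induction s using Finset.strongInduction with
  | H s ih =>
  rcases s.eq_empty_or_nonempty with rfl | hne
  · exact ⟨∅, empty_subset _, by simp, by simp⟩
  obtain ⟨a, haC, hs⟩ := exists_mem_card_le_mul_card_filter A hne hC
  set s' := s.filter fun i => a ∉ A i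
  have hsplit : (s.filter fun i => a ∈ A i).card + s'.card = s.card :=
    card_filter_add_card_filter_not _
  have hs' : s' ⊂ s := by
    obtain ⟨i, hi⟩ : (s.filter fun i => a ∈ A i).Nonempty :=
      card_pos.1 <| Nat.pos_of_ne_zero fun h0 => by
        rw [h0, mul_zero, Nat.le_zero, card_eq_zero] at hs
        exact hne.ne_empty hs
    exact filter_ssubset.2 ⟨i, (mem_filter.1 hi).1, not_not.2 (mem_filter.1 hi).2⟩
  obtain ⟨B', hB'C, hB', hB'card⟩ : ∃ B' ⊆ C, (∀ i ∈ s, a ∉ A i → (A i ∩ B').Nonempty) ∧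
      (B'.card : ℝ) + 1 ≤ C.card * Real.log s.card + 1 := by
    rcases s'.eq_empty_or_nonempty with hempty | hne'
    · refine ⟨∅, empty_subset _, fun i hi ha => ?_, ?_⟩
      · have : i ∈ s' := mem_filter.2 ⟨hi, ha⟩
        simp [hempty] at this
      · simpa using mul_nonneg (Nat.cast_nonneg _) (Real.log_natCast_nonneg _)
    obtain ⟨B', hB'C, hB', hB'card⟩ := ih s' hs' fun i hi => hC i (filter_subset _ _ hi)
    refine ⟨B', hB'C, fun i hi ha => hB' i (mem_filter.2 ⟨hi, ha⟩), ?_⟩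
    have hsR : (s.card : ℝ) ≤ C.card * (s.filter fun i => a ∈ A i).card := by exact_mod_cast hs
    have hsplitR : ((s.filter fun i => a ∈ A i).card : ℝ) + s'.card = s.card := by
      exact_mod_cast hsplit
    have := mul_log_add_one_le_mul_log (Nat.cast_nonneg C.card)
      (Nat.cast_pos.2 (card_pos.2 hne')) (Nat.cast_pos.2 (card_pos.2 hne))
      (by rw [← hsplitR] at hsR ⊢; linarith)
    linarith
  refine ⟨insert a B', insert_subset haC hB'C, fun i hi => ?_, ?_⟩
  · by_cases ha : a ∈ A i
    · exact ⟨a, mem_inter.2 ⟨ha, mem_insert_self _ _⟩⟩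
    · exact (hB' i hi ha).mono (inter_subset_inter_left (subset_insert _ _))
  · exact le_trans (by exact_mod_cast card_insert_le a B') hB'card

lemma exists_nodeCover_card_le (M : Finset Rule) :
    ∃ B, IsNodeCover M B ∧ (B.card : ℝ) ≤ betaS M * Real.log M.card + 1 := by
  have hall : IsNodeCover M (attrsS M) :=
    ⟨subset_rfl, fun r hr ⟨a, ha⟩ => ⟨a, mem_inter.2 ⟨ha, mem_biUnion.2 ⟨r, hr, ha⟩⟩⟩⟩
  obtain ⟨C, ⟨hCM, hC⟩, hCcard⟩ := Nat.sInf_mem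
    (s := {k | ∃ B : Finset ℕ, IsNodeCover M B ∧ B.card = k}) ⟨_, _, hall, rfl⟩
  set M' := M.filter fun r => r.attrs.Nonempty
  obtain ⟨B, hBC, hB, hBcard⟩ := exists_subset_hitting_card_le Rule.attrs C M'
    fun r hr => hC r (filter_subset _ _ hr) (mem_filter.1 hr).2
  refine ⟨B, ⟨hBC.trans hCM, fun r hr hne => hB r (mem_filter.2 ⟨hr, hne⟩)⟩, ?_⟩
  have hlog : Real.log M'.card ≤ Real.log M.card := by
    rcases M'.eq_empty_or_nonempty with h | h
    · simpa [h] using Real.log_natCast_nonneg _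
    · exact Real.log_le_log (Nat.cast_pos.2 (card_pos.2 h))
        (Nat.cast_le.2 (card_le_card (filter_subset _ _)))
  rw [betaS, ← hCcard]
  exact hBcard.trans (by gcongr)

lemma exists_isMaxSet (T : Finset Rule) : ∃ M, IsMaxSet T M := by
  classical
  set keys := (T.filter fun r => r.len = dS T).image Rule.K
  have hrep : ∀ κ ∈ keys, ∃ r, (r ∈ T ∧ r.len = dS T) ∧ r.K = κ := fun κ hκ => by
    simpa [keys] using hκ
  choose rep hrepT hrepK using hrep
  refine ⟨keys.attach.image fun κ => rep κ.1 κ.2, ?_, ?_, ?_⟩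
  · simp only [mem_image]
    rintro _ ⟨κ, -, rfl⟩
    exact hrepT κ.1 κ.2
  · intro r hr hlen
    have hκ : r.K ∈ keys := mem_image_of_mem _ (mem_filter.2 ⟨hr, hlen⟩)
    exact ⟨rep r.K hκ, mem_image.2 ⟨⟨r.K, hκ⟩, mem_attach _ _, rfl⟩, hrepK _ hκ⟩
  · simp only [mem_image]
    rintro _ ⟨κ₁, -, rfl⟩ _ ⟨κ₂, -, rfl⟩ hK
    rw [hrepK, hrepK] at hK
    obtain rfl : κ₁ = κ₂ := Subtype.ext hK
    rfl

lemma exists_roundOK {S : Finset Rule} {α : Finset (ℕ × Val)} (hne : (sysRestrict S α).Nonempty)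
    (hr : ∃ r ∈ sysRestrict S α, r.lhs ≠ ∅) : ∃ B, RoundOK S α B := by
  obtain ⟨M, hM⟩ := exists_isMaxSet (sysRestrict S α)
  obtain ⟨B, hB, hcard⟩ := exists_nodeCover_card_le M
  exact ⟨B, hne, hr, M, hM, hB, hcard⟩

lemma PartialRun.exists_finished {S : Finset Rule} {f : ℕ → Val} {Bs : List (Finset ℕ)}
    (h : PartialRun S f Bs) : ∃ Bs', PartialRun S f Bs' ∧ Finished S f Bs' := by
  induction hd : dS (sysRestrict S (accAlpha S f Bs)) using Nat.strong_induction_on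
    generalizing Bs with
  | _ d ih =>
  by_cases hfin : Finished S f Bs
  · exact ⟨Bs, h, hfin⟩
  simp only [Finished, not_or, not_forall, ← nonempty_iff_ne_empty] at hfin
  obtain ⟨hne, r, hr, hlhs⟩ := hfin
  obtain ⟨B, hB⟩ := exists_roundOK hne ⟨r, hr, nonempty_iff_ne_empty.1 hlhs⟩
  refine ih _ ?_ (partialRun_append_singleton_iff.2 ⟨h, hB⟩) rfl
  rw [accAlpha_append_singleton, ← hd]
  exact dS_sysRestrict_union_roundEqs_lt hB

section Bounds

variable {S : Finset Rule} {f : ℕ → Val}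

lemma log_card_isMaxSet_le (hWF : ∀ r ∈ S, r.WF) (hf : InEV S f) {α : Finset (ℕ × Val)}
    (hα : α ⊆ KofTuple S f) {M : Finset Rule} (hM : IsMaxSet (sysRestrict S α) M) :
    Real.log M.card ≤ hEAR S * Real.log (kS S + 1) := by
  obtain ⟨Γ, hΓ, hdepth⟩ := exists_solvesEAR_depth_eq_hEAR S
  have hcard := hdepth ▸ card_isMaxSet_le_pow_depth hWF hf hα hM hΓ
  rw [← Real.log_pow]
  rcases M.eq_empty_or_nonempty with h | h
  · simpa [h] using Real.log_nonneg (one_le_pow₀ (by simp))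
  · exact Real.log_le_log (Nat.cast_pos.2 (card_pos.2 h)) (by exact_mod_cast hcard)

lemma card_roundEqs_le_of_roundOK (hS : SysWF S) (hf : InEV S f) {α : Finset (ℕ × Val)}
    (hα : α ⊆ KofTuple S f) {B : Finset ℕ} (hB : RoundOK S α B) :
    ((roundEqs S f B).card : ℝ) ≤ hEAR S ^ 2 * Real.log (kS S + 1) + 1 := by
  obtain ⟨-, -, M, hM, -, hBcard⟩ := hB
  obtain ⟨Γ, hΓ, hdepth⟩ := exists_solvesEAR_depth_eq_hEAR S
  have hβ : (betaS M : ℝ) ≤ hEAR S := by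
    exact_mod_cast hdepth ▸ betaS_le_depth hS.2 hf hα hM hΓ
  calc ((roundEqs S f B).card : ℝ) ≤ B.card := by exact_mod_cast card_roundEqs_le B
    _ ≤ betaS M * Real.log M.card + 1 := hBcard
    _ ≤ hEAR S * (hEAR S * Real.log (kS S + 1)) + 1 := by
        gcongr
        exact log_card_isMaxSet_le hS.2 hf hα hM
    _ = hEAR S ^ 2 * Real.log (kS S + 1) + 1 := by ring

lemma PartialRun.exists_roundOK_of_mem {Bs : List (Finset ℕ)} (h : PartialRun S f Bs)
    {B : Finset ℕ} (hB : B ∈ Bs) : ∃ α ⊆ KofTuple S f, RoundOK S α B := by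
  obtain ⟨i, rfl⟩ := List.mem_iff_get.1 hB
  exact ⟨_, accAlpha_subset_KofTuple _, h i⟩

lemma PartialRun.sum_card_roundEqs_le (hS : SysWF S) (hf : InEV S f) {Bs : List (Finset ℕ)}
    (h : PartialRun S f Bs) :
    (((Bs.map fun B => (roundEqs S f B).card).sum : ℕ) : ℝ) ≤
      hEAR S ^ 3 * Real.log (kS S + 1) + hEAR S := by
  have hlog : 0 ≤ Real.log (kS S + 1) := Real.log_nonneg (by simp)
  have hlen : (Bs.length : ℝ) ≤ hEAR S := by
    exact_mod_cast (h.length_le hS.2).trans (dS_le_hEAR hS)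
  have hround : ∀ x ∈ Bs.map fun B => ((roundEqs S f B).card : ℝ),
      x ≤ hEAR S ^ 2 * Real.log (kS S + 1) + 1 := by
    simp only [List.mem_map]
    rintro _ ⟨B, hB, rfl⟩
    obtain ⟨α, hα, hround⟩ := h.exists_roundOK_of_mem hB
    exact card_roundEqs_le_of_roundOK hS hf hα hround
  calc (((Bs.map fun B => (roundEqs S f B).card).sum : ℕ) : ℝ)
      = (Bs.map fun B => ((roundEqs S f B).card : ℝ)).sum := by
        rw [Nat.cast_list_sum, List.map_map]; rfl
    _ ≤ Bs.length * (hEAR S ^ 2 * Real.log (kS S + 1) + 1) := by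
        simpa only [List.length_map, nsmul_eq_mul] using List.sum_le_card_nsmul _ _ hround
    _ ≤ hEAR S * (hEAR S ^ 2 * Real.log (kS S + 1) + 1) :=
        mul_le_mul_of_nonneg_right hlen (add_nonneg (mul_nonneg (by positivity) hlog) zero_le_one)
    _ = hEAR S ^ 3 * Real.log (kS S + 1) + hEAR S := by ring

end Bounds

theorem greedy_process_general (S : Finset Rule) (hS : SysWF S)
    (f : ℕ → Val) (hf : InEV S f) :
    (∀ Bs : List (Finset ℕ), PartialRun S f Bs → Bs.length ≤ dS S) ∧
    dS S ≤ hEAR S ∧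
    (∃ Bs : List (Finset ℕ), PartialRun S f Bs ∧ Finished S f Bs) ∧
    (∀ Bs : List (Finset ℕ), PartialRun S f Bs → Finished S f Bs →
      (((Bs.map (fun B => (roundEqs S f B).card)).sum : ℝ) ≤
        (hEAR S : ℝ) ^ 3 * Real.log (kS S + 1) + (hEAR S : ℝ)) ∧
      S.filter (fun r => Consistent (r.K ∪ accAlpha S f Bs)) =
        S.filter (fun r => Realizable S f r)) ∧
    (∃ Γ : DT, Γ.SolvesEAR S ∧
      (Γ.depth S : ℝ) ≤ (hEAR S : ℝ) ^ 3 * Real.log (kS S + 1) + (hEAR S : ℝ)) := by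
  refine ⟨fun Bs h => h.length_le hS.2, dS_le_hEAR hS, partialRun_nil.exists_finished,
    fun Bs h hfin => ⟨h.sum_card_roundEqs_le hS hf, hfin.filter_consistent_eq⟩, ?_⟩
  obtain ⟨Γ, hΓ, hdepth⟩ := exists_solvesEAR_depth_eq_hEAR S
  refine ⟨Γ, hΓ, ?_⟩
  rw [hdepth, le_add_iff_nonneg_left]
  exact mul_nonneg (by positivity) (Real.log_nonneg (by simp))

/-- Theorem 1. Let `S` be a decision rule system with `n(S) > 0` and
`δ̄ ∈ EV(S)`. Consider the round-based process: set `α := ∅`; while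
`S_α ≠ ∅` and some rule of `S_α` has nonempty left-hand side, choose any node
cover `B` of `G((S_α)^max)` with `|B| ≤ β((S_α)^max) · ln |(S_α)^max| + 1`
and replace `α` by `α ∪ {a = δ : a ∈ B, (a = δ) ∈ K(S, δ̄)}`. Then:
(i) the process terminates after at most `d(S) ≤ h_EAR(S)` rounds (every
partial run has length at most `d(S)`, and some complete run exists);
(ii) the total number of equations added over all rounds is at most
`h_EAR(S)³ · ln (k(S) + 1) + h_EAR(S)`;
(iii) upon termination, `{r ∈ S : K(r) ∪ α is consistent}` equals the set of
rules of `S` realizable for `δ̄`.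
In particular, this process describes the work of a decision tree `Γ` over
`S` that solves the problem `EAR(S)` and satisfies
`h(Γ) ≤ h_EAR(S)³ · ln (k(S) + 1) + h_EAR(S)`. -/
theorem greedy_process (S : Finset Rule) (hS : SysWF S) (hn : 0 < nS S)
    (f : ℕ → Val) (hf : InEV S f) :
    (∀ Bs : List (Finset ℕ), PartialRun S f Bs → Bs.length ≤ dS S) ∧
    dS S ≤ hEAR S ∧
    (∃ Bs : List (Finset ℕ), PartialRun S f Bs ∧ Finished S f Bs) ∧
    (∀ Bs : List (Finset ℕ), PartialRun S f Bs → Finished S f Bs →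
      (((Bs.map (fun B => (roundEqs S f B).card)).sum : ℝ) ≤
        (hEAR S : ℝ) ^ 3 * Real.log (kS S + 1) + (hEAR S : ℝ)) ∧
      S.filter (fun r => Consistent (r.K ∪ accAlpha S f Bs)) =
        S.filter (fun r => Realizable S f r)) ∧
    (∃ Γ : DT, Γ.SolvesEAR S ∧
      (Γ.depth S : ℝ) ≤ (hEAR S : ℝ) ^ 3 * Real.log (kS S + 1) + (hEAR S : ℝ)) :=
  greedy_process_general S hS f hf
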